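/- Let h be a positive semidefinite symmetric bilinear form on a finite-dimensional real inner product space, w a vector, a a real number. If for all V, a + 2⟨w,V⟩ + h(V,V) ≥ 0, then w lies in the range of h (viewed as a linear map) and a ≥ ⟨h⁺w, w⟩ where h⁺ is the Moore–Penrose pseudoinverse. -/

import Mathlib

open scoped RealInnerProductSpace

/-! The quadratic `q V = a + 2⟪w, V⟫ + ⟪h V, V⟫` is affine along `ker h`, so its lower bound forces
`w ⊥ ker h = (range h)ᗮ`, i.e. `w ∈ range h`. If `h z = w`, then `V = -z` is a critical point of `q`,
where `q (-z) = a - ⟪z, w⟫`. -/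

theorem eq_zero_of_forall_nonneg_add_mul {a c : ℝ} (H : ∀ t : ℝ, 0 ≤ a + t * c) : c = 0 := by
  by_contra hc
  have := H (-(a + 1) / c)
  rw [div_mul_cancel₀ _ hc] at this
  linarith

theorem LinearMap.IsSymmetric.range_eq_orthogonal_ker {𝕜 E : Type*} [RCLike 𝕜]
    [NormedAddCommGroup E] [InnerProductSpace 𝕜 E] [FiniteDimensional 𝕜 E] {T : E →ₗ[𝕜] E}
    (hT : T.IsSymmetric) : LinearMap.range T = (LinearMap.ker T)ᗮ := by
  rw [← hT.orthogonal_range, Submodule.orthogonal_orthogonal]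

section QuadraticLowerBound

variable {T : Type*} [NormedAddCommGroup T] [InnerProductSpace ℝ T]
  {h : T →ₗ[ℝ] T} {w : T} {a : ℝ}

theorem mem_orthogonal_ker_of_forall_nonneg
    (hineq : ∀ V : T, 0 ≤ a + 2 * ⟪w, V⟫ + ⟪h V, V⟫) : w ∈ (LinearMap.ker h)ᗮ := by
  rw [Submodule.mem_orthogonal']
  intro v hv
  rw [LinearMap.mem_ker] at hv
  have h2 : 2 * ⟪w, v⟫ = 0 := eq_zero_of_forall_nonneg_add_mul (a := a) fun t => by
    simpa [hv, real_inner_smul_right, mul_left_comm] using hineq (t • v)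
  linarith

theorem inner_le_of_forall_nonneg
    (hineq : ∀ V : T, 0 ≤ a + 2 * ⟪w, V⟫ + ⟪h V, V⟫) {z : T} (hz : h z = w) : ⟪z, w⟫ ≤ a := by
  have := hineq (-z)
  rw [map_neg, inner_neg_right, inner_neg_left, inner_neg_right, neg_neg, hz, real_inner_comm z w]
    at this
  linarith

end QuadraticLowerBound

theorem harnack_psd_general {T : Type*} [NormedAddCommGroup T]
    [InnerProductSpace ℝ T] [FiniteDimensional ℝ T]
    (h : T →ₗ[ℝ] T) (hsymm : ∀ x y : T, ⟪h x, y⟫ = ⟪x, h y⟫)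
    (w : T) (a : ℝ)
    (hineq : ∀ V : T, 0 ≤ a + 2 * ⟪w, V⟫ + ⟪h V, V⟫) :
    w ∈ LinearMap.range h ∧ ∀ z : T, h z = w → ⟪z, w⟫ ≤ a := by
  have hrange : LinearMap.range h = (LinearMap.ker h)ᗮ :=
    LinearMap.IsSymmetric.range_eq_orthogonal_ker hsymm
  exact ⟨hrange ▸ mem_orthogonal_ker_of_forall_nonneg hineq,
    fun _ hz => inner_le_of_forall_nonneg hineq hz⟩

/-- Positive semidefinite version: if `h` is a self-adjoint positive semidefinite
operator on a finite-dimensional real inner product space and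
`a + 2⟨w,V⟩ + h(V,V) ≥ 0` for all `V`, then `w` lies in the range of `h` and
`a ≥ ⟨h⁺w, w⟩`, i.e. `a ≥ ⟨z, w⟩` for any `z` with `h z = w`. -/
theorem harnack_psd {T : Type*} [NormedAddCommGroup T]
    [InnerProductSpace ℝ T] [FiniteDimensional ℝ T]
    (h : T →ₗ[ℝ] T) (hsymm : ∀ x y : T, ⟪h x, y⟫ = ⟪x, h y⟫)
    (hpsd : ∀ V : T, 0 ≤ ⟪h V, V⟫)
    (w : T) (a : ℝ)
    (hineq : ∀ V : T, 0 ≤ a + 2 * ⟪w, V⟫ + ⟪h V, V⟫) :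
    w ∈ LinearMap.range h ∧ ∀ z : T, h z = w → ⟪z, w⟫ ≤ a :=
  harnack_psd_general h hsymm w a hineq
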